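/- arXiv:0711.4166 — 3 statements merged into one kernel-verified Lean document; each statement's English description precedes it below -/
import Mathlib

section
/- Let G be a group, i an involution in G, and A an abelian subgroup containing ii^g for some g ∈ G, such that A is normalized and inverted by i (i.e., i·a·i = a⁻¹ for all a ∈ A), and A contains no involutions. If x, y ∈ g·A both centralize i, then x = y. -/
theorem sq_eq_one_of_commute_of_mul_mul_eq_inv {G : Type*} [Group G] {i c : G}
    (hi : i ^ 2 = 1) (hic : Commute i c) (h : i * c * i = c⁻¹) : c ^ 2 = 1 := by
  have hc : c⁻¹ = c := by rw [← h, hic.eq, mul_assoc, ← sq, hi, mul_one]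
  rw [sq, ← inv_eq_iff_mul_eq_one, hc]

theorem stmt5_general {G : Type*} [Group G] (i g : G) (A : Subgroup G)
    (hi : i ^ 2 = 1)
    (hinv : ∀ a ∈ A, i * a * i = a⁻¹)
    (hnoinv : ∀ a ∈ A, a ^ 2 = 1 → a = 1)
    (x y : G) (hx : ∃ a ∈ A, x = g * a) (hy : ∃ a ∈ A, y = g * a)
    (hxc : x * i = i * x) (hyc : y * i = i * y) :
    x = y := by
  obtain ⟨a, ha, rfl⟩ := hx
  obtain ⟨b, hb, rfl⟩ := hy
  have hmem : (g * a)⁻¹ * (g * b) ∈ A := by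
    rw [show (g * a)⁻¹ * (g * b) = a⁻¹ * b by group]
    exact mul_mem (inv_mem ha) hb
  have hcomm : Commute i ((g * a)⁻¹ * (g * b)) :=
    (Commute.inv_right hxc.symm).mul_right hyc.symm
  exact inv_mul_eq_one.mp
    (hnoinv _ hmem (sq_eq_one_of_commute_of_mul_mul_eq_inv hi hcomm (hinv _ hmem)))

/-- Let `i` be an involution, `A` an abelian subgroup containing
`i * i^g`, normalized and inverted by `i`, and without involutions. If
`x, y ∈ g·A` both centralize `i`, then `x = y`. -/
theorem stmt5 {G : Type*} [Group G] (i g : G) (A : Subgroup G)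
    (hi : i ^ 2 = 1) (hi1 : i ≠ 1)
    (hcomm : ∀ a ∈ A, ∀ b ∈ A, a * b = b * a)
    (hmem : i * (g⁻¹ * i * g) ∈ A)
    (hnorm : ∀ a ∈ A, i * a * i⁻¹ ∈ A)
    (hinv : ∀ a ∈ A, i * a * i = a⁻¹)
    (hnoinv : ∀ a ∈ A, a ^ 2 = 1 → a = 1)
    (x y : G) (hx : ∃ a ∈ A, x = g * a) (hy : ∃ a ∈ A, y = g * a)
    (hxc : x * i = i * x) (hyc : y * i = i * y) :
    x = y :=
  stmt5_general i g A hi hinv hnoinv x y hx hy hxc hyc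
end

section
/- Let G be a group with no elements of order 2 and let i be an automorphism of G with i² = id. Suppose every element of G inverted by i has a square root in G that is also inverted by i. Then G = {h · c : h ∈ G is inverted by i, and c ∈ G is fixed by i}; more precisely, every g ∈ G can be written as g = h·c with i(h) = h⁻¹ and i(c) = c. -/
/-! The element `x = g * (f g)⁻¹` is inverted by the involution `f`. If `h` is a square root of `x`
inverted by `f`, then `c = h⁻¹ * g` is fixed by `f`, since `f g = x⁻¹ * g = h⁻¹ * h⁻¹ * g`. -/

section Involution

variable {G F : Type*} [Group G] [FunLike F G G] [MonoidHomClass F G G]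

theorem map_mul_inv_map_eq_inv {f : F} (hf : Function.Involutive f) (g : G) :
    f (g * (f g)⁻¹) = (g * (f g)⁻¹)⁻¹ := by
  rw [map_mul, map_inv, hf g, mul_inv_rev, inv_inv]

theorem map_inv_mul_eq_of_sq_eq_mul_inv_map {f : F} {g h : G} (hh : f h = h⁻¹)
    (hsq : h ^ 2 = g * (f g)⁻¹) : f (h⁻¹ * g) = h⁻¹ * g := by
  have hfg : f g = (h ^ 2)⁻¹ * g := by rw [hsq]; group
  rw [map_mul, map_inv, hh, inv_inv, hfg]
  group

end Involution

theorem stmt7_general {G : Type*} [Group G] (f : G ≃* G)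
    (hf2 : ∀ g : G, f (f g) = g)
    (hsqrt : ∀ x : G, f x = x⁻¹ → ∃ h : G, h ^ 2 = x ∧ f h = h⁻¹) :
    ∀ g : G, ∃ h c : G, f h = h⁻¹ ∧ f c = c ∧ g = h * c := by
  intro g
  obtain ⟨h, hsq, hh⟩ := hsqrt _ (map_mul_inv_map_eq_inv hf2 g)
  exact ⟨h, h⁻¹ * g, hh, map_inv_mul_eq_of_sq_eq_mul_inv_map hh hsq,
    (mul_inv_cancel_left h g).symm⟩

/-- Let `G` have no elements of order 2 and `f` an involutory
automorphism such that every element inverted by `f` has a square root inverted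
by `f`. Then every `g ∈ G` factors as `g = h * c` with `f h = h⁻¹`, `f c = c`. -/
theorem stmt7 {G : Type*} [Group G] (f : G ≃* G)
    (h2 : ∀ g : G, g ^ 2 = 1 → g = 1)
    (hf2 : ∀ g : G, f (f g) = g)
    (hsqrt : ∀ x : G, f x = x⁻¹ → ∃ h : G, h ^ 2 = x ∧ f h = h⁻¹) :
    ∀ g : G, ∃ h c : G, f h = h⁻¹ ∧ f c = c ∧ g = h * c :=
  stmt7_general f hf2 hsqrt
end

section
/- Let H be a finite group of odd order and let V = ⟨i, j⟩ be a Klein four-group acting on H by automorphisms. Then H is generated by the fixed-point subgroups of the nontrivial elements of V: H = ⟨C_H(i), C_H(j), C_H(ij)⟩. -/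
/-!
For every prime `p`, `V` permutes the Sylow `p`-subgroups of `H`, whose number is odd, so as a
2-group it fixes one of them. Hence it suffices to show that a `V`-invariant solvable subgroup lies
in the closure, and this is done by induction on the order through the commutator subgroup `N`.
Modulo `N` the group is abelian, and there `x²` is a product of fixed points, namely
`2x = (1 + φ)x + (1 + ψ)x + (1 + φψ)x - (1 + φ)(1 + ψ)x` additively; since `|H|` is odd, `x` is a
power of `x²`. As `|N|` is odd too, a coset of `N` fixed by an involution contains a fixed point
of it, so fixed points of the quotient lift to `H`.
-/

open Function Set Pointwise

theorem Function.Involutive.odd_card_fixedPoints {α : Type*} {f : α → α} (hf : Involutive f)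
    (hodd : Odd (Nat.card α)) : Odd (Nat.card (fixedPoints f)) := by
  classical
  have := Nat.finite_of_card_ne_zero hodd.pos.ne'
  have := Fintype.ofFinite α
  have hmod := Equiv.Perm.card_fixedPoints_modEq (p := 2) (n := 1) (f := (f : Function.End α))
    (funext hf)
  rw [Nat.card_eq_fintype_card, Nat.odd_iff] at hodd ⊢
  exact Eq.trans hmod.symm hodd

theorem Function.Involutive.exists_isFixedPt_of_mapsTo {α : Type*} {f : α → α} (hf : Involutive f)
    {s : Set α} (hs : MapsTo f s s) (hodd : Odd (Nat.card s)) : ∃ x ∈ s, IsFixedPt f x := by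
  have hres : Involutive (hs.restrict f s s) := fun x => Subtype.ext (hf x)
  obtain ⟨⟨⟨x, hxs⟩, hx⟩⟩ := (Nat.card_pos_iff.mp (hres.odd_card_fixedPoints hodd).pos).1
  exact ⟨x, hxs, congrArg Subtype.val hx⟩

theorem Function.Involutive.exists_isFixedPt_of_commute {α : Type*} {f g : α → α}
    (hf : Involutive f) (hg : Involutive g) (hfg : Function.Commute f g)
    (hodd : Odd (Nat.card α)) : ∃ x, IsFixedPt f x ∧ IsFixedPt g x :=
  hg.exists_isFixedPt_of_mapsTo hfg.symm.mapsTo_fixedPoints (hf.odd_card_fixedPoints hodd)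

theorem Function.Involutive.comp_of_commute {α : Type*} {f g : α → α} (hf : Involutive f)
    (hg : Involutive g) (hfg : Function.Commute f g) : Involutive (f ∘ g) := fun x => by
  simp only [comp_apply]
  rw [hfg, hf, hg]

section

variable {H : Type*} [Group H]

theorem Subgroup.mem_of_sq_mem (hodd : Odd (Nat.card H)) {K : Subgroup H} {x : H}
    (hx : x ^ 2 ∈ K) : x ∈ K := by
  obtain ⟨m, hm⟩ := hodd
  have : (x ^ 2) ^ (m + 1) = x := by
    rw [← pow_mul, show 2 * (m + 1) = Nat.card H + 1 by omega, pow_succ, pow_card_eq_one',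
      one_mul]
  exact this ▸ K.pow_mem hx _

theorem Subgroup.mapsTo_of_characteristic (N : Subgroup H) [hN : N.Characteristic]
    (σ : H ≃* H) : MapsTo σ N N := fun x hx => by
  rw [← hN.fixed σ] at hx
  exact hx

theorem MulEquiv.exists_isFixedPt_mem_leftCoset (hodd : Odd (Nat.card H)) {σ : H ≃* H}
    (hσ : Involutive σ) {N : Subgroup H} (hN : MapsTo σ N N) {x : H} (hx : x⁻¹ * σ x ∈ N) :
    ∃ c, IsFixedPt σ c ∧ x⁻¹ * c ∈ N := by
  have hmaps : MapsTo σ (x • (N : Set H)) (x • (N : Set H)) := fun y hy => by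
    rw [mem_leftCoset_iff] at hy ⊢
    have : x⁻¹ * σ y = x⁻¹ * σ x * σ (x⁻¹ * y) := by simp [mul_assoc]
    exact this ▸ N.mul_mem hx (hN hy)
  have hodd' : Odd (Nat.card ↥(x • (N : Set H))) := by
    rw [Set.natCard_smul_set]
    exact hodd.of_dvd_nat N.card_subgroup_dvd_card
  obtain ⟨c, hc, hfix⟩ := hσ.exists_isFixedPt_of_mapsTo hmaps hodd'
  exact ⟨c, hfix, mem_leftCoset_iff x |>.mp hc⟩

def fixedPointsClosure (φ ψ : H ≃* H) : Subgroup H :=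
  Subgroup.closure (fixedPoints φ ∪ fixedPoints ψ ∪ fixedPoints (φ ∘ ψ))

variable {φ ψ : H ≃* H}

theorem mem_fixedPointsClosure_of_left {x : H} (hx : φ x = x) : x ∈ fixedPointsClosure φ ψ :=
  Subgroup.subset_closure (Or.inl (Or.inl hx))

theorem mem_fixedPointsClosure_of_right {x : H} (hx : ψ x = x) : x ∈ fixedPointsClosure φ ψ :=
  Subgroup.subset_closure (Or.inl (Or.inr hx))

theorem mem_fixedPointsClosure_of_comp {x : H} (hx : φ (ψ x) = x) :
    x ∈ fixedPointsClosure φ ψ :=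
  Subgroup.subset_closure (Or.inr hx)

theorem fixedPointsClosure_eq_top_of_commGroup {G : Type*} [CommGroup G]
    (hodd : Odd (Nat.card G)) {φ ψ : G ≃* G} (hφ : Involutive φ) (hψ : Involutive ψ)
    (hcomm : Function.Commute φ ψ) : fixedPointsClosure φ ψ = ⊤ := by
  have hφψ : ∀ y, φ (ψ (φ (ψ y))) = y := hφ.comp_of_commute hψ hcomm
  refine eq_top_iff.mpr fun x _ => Subgroup.mem_of_sq_mem hodd ?_
  have h₁ : x * φ x ∈ fixedPointsClosure φ ψ :=
    mem_fixedPointsClosure_of_left (by rw [map_mul, hφ, mul_comm])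
  have h₂ : x * ψ x ∈ fixedPointsClosure φ ψ :=
    mem_fixedPointsClosure_of_right (by rw [map_mul, hψ, mul_comm])
  have h₃ : x * φ (ψ x) ∈ fixedPointsClosure φ ψ :=
    mem_fixedPointsClosure_of_comp (by rw [map_mul, map_mul, hφψ, mul_comm])
  have h₄ : x * φ x * ψ x * φ (ψ x) ∈ fixedPointsClosure φ ψ :=
    mem_fixedPointsClosure_of_left (by simp only [map_mul, hφ _]; rw [hcomm]; ac_rfl)
  have hsq : x ^ 2 = x * φ x * (x * ψ x) * (x * φ (ψ x)) / (x * φ x * ψ x * φ (ψ x)) :=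
    eq_div_of_mul_eq' (by rw [pow_two]; ac_rfl)
  rw [hsq]
  exact div_mem (mul_mem (mul_mem h₁ h₂) h₃) h₄

def MulEquiv.restrictOfInvolutive (σ : H ≃* H) (hσ : Involutive σ) (A : Subgroup H)
    (hA : MapsTo σ A A) : A ≃* A where
  toFun x := ⟨σ (x : H), hA x.2⟩
  invFun x := ⟨σ (x : H), hA x.2⟩
  left_inv x := Subtype.ext (hσ x)
  right_inv x := Subtype.ext (hσ x)
  map_mul' x y := Subtype.ext (map_mul σ (x : H) y)

theorem le_fixedPointsClosure_of_restrict (hφ : Involutive φ) (hψ : Involutive ψ)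
    {A : Subgroup H} (hAφ : MapsTo φ A A) (hAψ : MapsTo ψ A A)
    (h : fixedPointsClosure (φ.restrictOfInvolutive hφ A hAφ) (ψ.restrictOfInvolutive hψ A hAψ)
      = ⊤) :
    A ≤ fixedPointsClosure φ ψ := by
  rw [← A.range_subtype, MonoidHom.range_eq_map, ← h, fixedPointsClosure,
    MonoidHom.map_closure]
  refine Subgroup.closure_mono ?_
  rintro _ ⟨x, (hx | hx) | hx, rfl⟩
  · exact Or.inl (Or.inl (congrArg Subtype.val hx))
  · exact Or.inl (Or.inr (congrArg Subtype.val hx))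
  · exact Or.inr (congrArg Subtype.val hx)

theorem MulEquiv.fixedPoints_abelianizationCongr_subset (hodd : Odd (Nat.card H))
    {σ : H ≃* H} (hσ : Involutive σ) :
    fixedPoints σ.abelianizationCongr ⊆ Abelianization.of '' fixedPoints σ := by
  intro y hy
  obtain ⟨x, rfl⟩ := QuotientGroup.mk_surjective y
  have hx : x⁻¹ * σ x ∈ commutator H := QuotientGroup.eq.mp hy.symm
  obtain ⟨c, hc, hxc⟩ :=
    σ.exists_isFixedPt_mem_leftCoset hodd hσ
      ((commutator H).mapsTo_of_characteristic σ) hx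
  exact ⟨c, hc, (QuotientGroup.eq.mpr hxc).symm⟩

theorem fixedPointsClosure_eq_top_of_commutator_le (hodd : Odd (Nat.card H))
    (hφ : Involutive φ) (hψ : Involutive ψ) (hcomm : Function.Commute φ ψ)
    (hle : commutator H ≤ fixedPointsClosure φ ψ) :
    fixedPointsClosure φ ψ = ⊤ := by
  have hφ' : Involutive φ.abelianizationCongr := fun y =>
    QuotientGroup.induction_on y fun x => congrArg Abelianization.of (hφ x)
  have hψ' : Involutive ψ.abelianizationCongr := fun y =>
    QuotientGroup.induction_on y fun x => congrArg Abelianization.of (hψ x)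
  have hcomm' : Function.Commute φ.abelianizationCongr ψ.abelianizationCongr := fun y =>
    QuotientGroup.induction_on y fun x => congrArg Abelianization.of (hcomm x)
  have hodd' : Odd (Nat.card (Abelianization H)) :=
    hodd.of_dvd_nat (Subgroup.card_quotient_dvd_card _)
  have hcomp : ⇑φ.abelianizationCongr ∘ ⇑ψ.abelianizationCongr =
      (ψ.trans φ).abelianizationCongr := by
    rw [← abelianizationCongr_trans]; rfl
  have hmap : (fixedPointsClosure φ ψ).map Abelianization.of = ⊤ := by
    rw [eq_top_iff, ← fixedPointsClosure_eq_top_of_commGroup hodd' hφ' hψ' hcomm',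
      fixedPointsClosure, hcomp, fixedPointsClosure, MonoidHom.map_closure, image_union,
      image_union]
    exact Subgroup.closure_mono (union_subset_union (union_subset_union
      (φ.fixedPoints_abelianizationCongr_subset hodd hφ)
      (ψ.fixedPoints_abelianizationCongr_subset hodd hψ))
      ((ψ.trans φ).fixedPoints_abelianizationCongr_subset hodd (hφ.comp_of_commute hψ hcomm)))
  calc fixedPointsClosure φ ψ = fixedPointsClosure φ ψ ⊔ Abelianization.of.ker := by
        rw [Abelianization.ker_of, sup_of_le_left hle]
    _ = ⊤ := by rw [← Subgroup.comap_map_eq, hmap, Subgroup.comap_top]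

end

theorem fixedPointsClosure_eq_top_of_isSolvable {H : Type*} [Group H] [Group.IsSolvable H]
    (hodd : Odd (Nat.card H)) {φ ψ : H ≃* H} (hφ : Involutive φ) (hψ : Involutive ψ)
    (hcomm : Function.Commute φ ψ) : fixedPointsClosure φ ψ = ⊤ := by
  induction hn : Nat.card H using Nat.strong_induction_on generalizing H with
  | _ n ih =>
  rcases subsingleton_or_nontrivial H with _ | _
  · exact Subsingleton.elim _ _
  have := Nat.finite_of_card_ne_zero hodd.pos.ne'
  set N := commutator H
  have hNφ : MapsTo φ N N := N.mapsTo_of_characteristic φ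
  have hNψ : MapsTo ψ N N := N.mapsTo_of_characteristic ψ
  have hcard : Nat.card N < n := hn ▸ lt_of_not_ge fun h =>
    (Group.IsSolvable.commutator_lt_top_of_nontrivial H).ne (Subgroup.eq_top_of_le_card N h)
  refine fixedPointsClosure_eq_top_of_commutator_le hodd hφ hψ hcomm
    (le_fixedPointsClosure_of_restrict hφ hψ hNφ hNψ ?_)
  exact ih _ hcard (hodd.of_dvd_nat N.card_subgroup_dvd_card) (fun x => Subtype.ext (hφ x))
    (fun x => Subtype.ext (hψ x)) (fun x => Subtype.ext (hcomm x)) rfl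

theorem exists_sylow_mapsTo {H : Type*} [Group H] (hodd : Odd (Nat.card H)) (p : ℕ)
    [Fact p.Prime] {φ ψ : H ≃* H} (hφ : Involutive φ) (hψ : Involutive ψ)
    (hcomm : Function.Commute φ ψ) : ∃ P : Sylow p H, MapsTo φ P P ∧ MapsTo ψ P P := by
  have := Nat.finite_of_card_ne_zero hodd.pos.ne'
  have hφ' : φ * φ = 1 := MulEquiv.ext hφ
  have hψ' : ψ * ψ = 1 := MulEquiv.ext hψ
  have hcomm' : φ * ψ = ψ * φ := MulEquiv.ext hcomm
  obtain ⟨P⟩ := (inferInstance : Nonempty (Sylow p H))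
  have hodd' : Odd (Nat.card (Sylow p H)) :=
    hodd.of_dvd_nat (P.card_dvd_index.trans (Subgroup.index_dvd_card _))
  obtain ⟨Q, hQφ, hQψ⟩ := Involutive.exists_isFixedPt_of_commute (f := (φ • ·)) (g := (ψ • ·))
    (fun P => by simp only [smul_smul, hφ', one_smul])
    (fun P => by simp only [smul_smul, hψ', one_smul])
    (fun P => by simp only [smul_smul, hcomm']) hodd'
  refine ⟨Q, fun x hx => ?_, fun x hx => ?_⟩
  · rw [← hQφ]; exact Subgroup.smul_mem_pointwise_smul x φ _ hx
  · rw [← hQψ]; exact Subgroup.smul_mem_pointwise_smul x ψ _ hx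

/-- If a Klein four-group `V = ⟨φ, ψ⟩` acts on a finite group `H`
of odd order by automorphisms, then `H` is generated by the fixed points of the
nontrivial elements of `V`. -/
theorem stmt11 {H : Type*} [Group H] [Finite H] (hodd : Odd (Nat.card H))
    (φ ψ : H ≃* H)
    (hφ : ∀ h, φ (φ h) = h) (hψ : ∀ h, ψ (ψ h) = h)
    (hcomm : ∀ h, φ (ψ h) = ψ (φ h)) :
    Subgroup.closure ({h | φ h = h} ∪ {h | ψ h = h} ∪ {h | φ (ψ h) = h}) = ⊤ := by
  refine Subgroup.index_eq_one.mp (Nat.eq_one_iff_not_exists_prime_dvd.mpr fun p hp hdvd => ?_)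
  have := Fact.mk hp
  obtain ⟨P, hPφ, hPψ⟩ := exists_sylow_mapsTo hodd p hφ hψ hcomm
  have := P.isPGroup'.isNilpotent
  have hP : (P : Subgroup H) ≤ fixedPointsClosure φ ψ :=
    le_fixedPointsClosure_of_restrict hφ hψ hPφ hPψ <|
      fixedPointsClosure_eq_top_of_isSolvable (hodd.of_dvd_nat P.card_subgroup_dvd_card)
        (fun x => Subtype.ext (hφ x)) (fun x => Subtype.ext (hψ x))
        (fun x => Subtype.ext (hcomm x))
  exact P.not_dvd_index (hdvd.trans (Subgroup.index_dvd_of_le hP))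
end
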